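/- arXiv:2510.22246 — 8 statements merged into one kernel-verified Lean document; each statement's English description precedes it below -/
import Mathlib

section
/- Let X be a compact metric space, f : X → X a continuous map, and p ∈ X. Then f is m_p-topologically stable (where m_p is the Dirac measure supported at p) if and only if p is a topologically stable point of f. -/
/-! Both notions ask for a semiconjugacy on a compact `g`-invariant set. For the Dirac measure
`m_p`, the condition `m_p(X \ Y) ≤ ε` with `ε < 1` just says `p ∈ Y`, and the smallest closed
`g`-invariant set containing `p` is the orbit closure `cl(O_g(p))`. So a semiconjugacy on an
admissible `Y` restricts to one on `cl(O_g(p))`, and conversely `cl(O_g(p))` is itself admissible. -/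

open MeasureTheory

/-- `f` is `μ`-topologically stable: for every `ε > 0` there is `δ > 0` such that for every
continuous `g` with `d_{C⁰}(f,g) ≤ δ` there are a compact `g`-invariant set `Y` with
`μ(X \ Y) ≤ ε` and a continuous `h : Y → X` with `d_{C⁰}(h, i_Y) ≤ ε` and `f ∘ h = h ∘ g`. -/
def MuTopStable {X : Type*} [MetricSpace X] [MeasurableSpace X]
    (μ : Measure X) (f : X → X) : Prop :=
  ∀ ε > 0, ∃ δ > 0, ∀ g : X → X, Continuous g →
    (∀ x, dist (f x) (g x) ≤ δ) →
    ∃ (Y : Set X) (hg : Set.MapsTo g Y Y), IsCompact Y ∧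
      μ Yᶜ ≤ ENNReal.ofReal ε ∧
      ∃ h : Y → X, Continuous h ∧ (∀ y : Y, dist (h y) (y : X) ≤ ε) ∧
        ∀ y : Y, f (h y) = h ⟨g y, hg y.2⟩

/-- `p` is a topologically stable point of `f`. -/
def TopStablePoint {X : Type*} [MetricSpace X] (f : X → X) (p : X) : Prop :=
  ∀ ε > 0, ∃ δ > 0, ∀ g : X → X, Continuous g →
    (∀ x, dist (f x) (g x) ≤ δ) →
    ∃ h : closure {x | ∃ n : ℕ, g^[n] p = x} → X, Continuous h ∧
      (∀ y, dist (h y) (y : X) ≤ ε) ∧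
      ∀ (y : closure {x | ∃ n : ℕ, g^[n] p = x})
        (hy : g ↑y ∈ closure {x | ∃ n : ℕ, g^[n] p = x}),
        f (h y) = h ⟨g ↑y, hy⟩

open Set

section ForwardOrbit

variable {X : Type*} [TopologicalSpace X] {g : X → X} {p : X} {Y : Set X}

theorem mapsTo_closure_forwardOrbit (hg : Continuous g) :
    MapsTo g (closure {x | ∃ n : ℕ, g^[n] p = x}) (closure {x | ∃ n : ℕ, g^[n] p = x}) :=
  MapsTo.closure (by rintro _ ⟨n, rfl⟩; exact ⟨n + 1, Function.iterate_succ_apply' g n p⟩) hg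

theorem closure_forwardOrbit_subset (hY : IsClosed Y) (hgY : MapsTo g Y Y) (hp : p ∈ Y) :
    closure {x | ∃ n : ℕ, g^[n] p = x} ⊆ Y :=
  hY.closure_subset_iff.mpr (by rintro _ ⟨n, rfl⟩; exact hgY.iterate n hp)

end ForwardOrbit

namespace MeasureTheory.Measure

variable {X : Type*} [MeasurableSpace X] {p : X} {Y : Set X}

theorem dirac_compl_eq_zero_iff (hY : MeasurableSet Y) : dirac p Yᶜ = 0 ↔ p ∈ Y :=
  mem_ae_iff.symm.trans (mem_ae_dirac_iff hY)

theorem mem_of_dirac_compl_le_ofReal (hY : MeasurableSet Y) {ε : ℝ} (hε : ε < 1)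
    (h : dirac p Yᶜ ≤ ENNReal.ofReal ε) : p ∈ Y := by
  refine (dirac_compl_eq_zero_iff hY).mp (dirac_apply_ne_one_iff_eq_zero.mp fun h_one => ?_)
  rw [h_one, ENNReal.one_le_ofReal] at h
  exact h.not_gt hε

end MeasureTheory.Measure

section DiracStability

variable {X : Type*} [MetricSpace X] [MeasurableSpace X] {f : X → X} {p : X}

theorem TopStablePoint.of_muTopStable_dirac [OpensMeasurableSpace X]
    (H : MuTopStable (Measure.dirac p) f) : TopStablePoint f p := by
  intro ε hε
  obtain ⟨δ, hδ, hstable⟩ := H (min ε (1 / 2)) (by positivity)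
  refine ⟨δ, hδ, fun g hg hfg => ?_⟩
  obtain ⟨Y, hgY, hYc, hμ, h, hcont, hdist, hconj⟩ := hstable g hg hfg
  have hpY : p ∈ Y := Measure.mem_of_dirac_compl_le_ofReal hYc.isClosed.measurableSet
    ((min_le_right _ _).trans_lt (by norm_num)) hμ
  have hsub := closure_forwardOrbit_subset hYc.isClosed hgY hpY
  exact ⟨fun y => h ⟨y, hsub y.2⟩, hcont.comp (continuous_inclusion hsub),
    fun y => (hdist _).trans (min_le_left _ _), fun y _ => hconj _⟩

theorem TopStablePoint.muTopStable_dirac [CompactSpace X] [OpensMeasurableSpace X]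
    (H : TopStablePoint f p) : MuTopStable (Measure.dirac p) f := by
  intro ε hε
  obtain ⟨δ, hδ, hstable⟩ := H ε hε
  refine ⟨δ, hδ, fun g hg hfg => ?_⟩
  obtain ⟨h, hcont, hdist, hconj⟩ := hstable g hg hfg
  have hgO := mapsTo_closure_forwardOrbit (p := p) hg
  have hμ : Measure.dirac p (closure {x | ∃ n : ℕ, g^[n] p = x})ᶜ = 0 :=
    (Measure.dirac_compl_eq_zero_iff isClosed_closure.measurableSet).mpr
      (subset_closure ⟨0, rfl⟩)
  exact ⟨_, hgO, isClosed_closure.isCompact, hμ.trans_le zero_le, h, hcont, hdist,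
    fun y => hconj y (hgO y.2)⟩

end DiracStability

theorem dirac_topologically_stable_iff_topStablePoint_general
    {X : Type*} [MetricSpace X] [CompactSpace X] [MeasurableSpace X] [BorelSpace X]
    (f : X → X) (p : X) :
    MuTopStable (Measure.dirac p) f ↔ TopStablePoint f p :=
  ⟨TopStablePoint.of_muTopStable_dirac, TopStablePoint.muTopStable_dirac⟩

theorem dirac_topologically_stable_iff_topStablePoint
    {X : Type*} [MetricSpace X] [CompactSpace X] [MeasurableSpace X] [BorelSpace X]
    (f : X → X) (hf : Continuous f) (p : X) :
    MuTopStable (Measure.dirac p) f ↔ TopStablePoint f p :=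
  dirac_topologically_stable_iff_topStablePoint_general f p
end

section
/- Let X be a compact metric space, f : X → X a continuous map, and μ, ν Borel probability measures on X. If f is ν-topologically stable and μ is absolutely continuous with respect to ν, then f is μ-topologically stable. -/
open MeasureTheory

theorem muTopStable_of_absolutelyContinuous
    {X : Type*} [MetricSpace X] [CompactSpace X] [MeasurableSpace X] [BorelSpace X]
    (μ ν : Measure X) [IsProbabilityMeasure μ] [IsProbabilityMeasure ν]
    (f : X → X) (hf : Continuous f)
    (hstab : MuTopStable ν f)
    (hac : ∀ B : Set X, MeasurableSet B → ν B = 0 → μ B = 0) :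
    MuTopStable μ f := by
  have hacμν : μ ≪ ν := Measure.AbsolutelyContinuous.mk hac
  intro ε hε
  -- ε-δ form of absolute continuity via Radon–Nikodym
  obtain ⟨δ', hδ'pos, hδ'⟩ := exists_pos_setLIntegral_lt_of_measure_lt
    (μ := ν) (f := μ.rnDeriv ν) (Measure.lintegral_rnDeriv_lt_top μ ν).ne
    (ENNReal.ofReal_pos.mpr hε).ne'
  -- choose a real number r > 0 with ofReal r < δ'
  obtain ⟨r, hrpos, hr⟩ : ∃ r > 0, ENNReal.ofReal r < δ' := by
    rcases lt_or_ge δ' 1 with h1 | h1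
    · have hδ'fin : δ' ≠ ⊤ := (h1.trans (by norm_num)).ne
      have htr : 0 < δ'.toReal := ENNReal.toReal_pos hδ'pos.ne' hδ'fin
      refine ⟨δ'.toReal / 2, by linarith, ?_⟩
      rw [ENNReal.ofReal_lt_iff_lt_toReal (by linarith) hδ'fin]
      linarith
    · exact ⟨1/2, by norm_num, lt_of_lt_of_le (by simp [ENNReal.ofReal_lt_one]) h1⟩
  set ε₀ := min ε r with hε₀def
  have hε₀pos : 0 < ε₀ := lt_min hε hrpos
  obtain ⟨δ, hδpos, hδ⟩ := hstab ε₀ hε₀pos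
  refine ⟨δ, hδpos, fun g hg hd => ?_⟩
  obtain ⟨Y, hgY, hYcomp, hνY, h, hhcont, hhdist, hhconj⟩ := hδ g hg hd
  refine ⟨Y, hgY, hYcomp, ?_, h, hhcont, fun y => (hhdist y).trans (min_le_left _ _), hhconj⟩
  -- μ Yᶜ ≤ ofReal ε
  have hYmeas : MeasurableSet Y := hYcomp.isClosed.measurableSet
  have hνY' : ν Yᶜ < δ' :=
    lt_of_le_of_lt (hνY.trans (ENNReal.ofReal_le_ofReal (min_le_right _ _))) hr
  have := hδ' Yᶜ hνY'
  have hμeq : μ Yᶜ = ∫⁻ x in Yᶜ, μ.rnDeriv ν x ∂ν := by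
    conv_lhs => rw [← Measure.withDensity_rnDeriv_eq μ ν hacμν]
    rw [withDensity_apply _ hYmeas.compl]
  rw [hμeq]
  exact this.le
end

section
/- Let f : M → M be a homeomorphism of a closed manifold M (a compact topological manifold without boundary) of dimension at least 2, and let μ be a finitely supported Borel probability measure on M. If f is μ-topologically stable, then f has the μ-shadowing property. -/
/-!
Choose `ε'` below `ε / 2` and below the mass of every atom, and let `δ` be given by
`μ`-topological stability at `ε'`. For a `δ`-perturbation `g` of `f`, the compact `g`-invariant
set `Y` has `μ Yᶜ ≤ ε'`, so it contains every atom, and the semiconjugacy `h` moves points by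
at most `ε'`: every `g`-orbit starting at an atom is `ε'`-shadowed by an `f`-orbit.

Given a fine pseudo-orbit `x` starting at an atom, first move its points slightly so that they
become pairwise distinct (a manifold of positive dimension has no isolated points). On a compact
manifold, finitely many distinct points can be sent simultaneously to prescribed nearby targets by
a continuous map uniformly close to the identity: translate in a chart, damped by a tent function
supported in a small ball, and glue such moves over disjoint balls. Composing such a map with `f`
gives a perturbation `g` whose orbit of `x 0` follows the first `N` steps of the pseudo-orbit.
The shadowing points obtained for each `N` accumulate, by compactness, on a point shadowing the
whole pseudo-orbit.
-/

open MeasureTheory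

/-- `f` has the `μ`-shadowing property. -/
def MuShadowing {X : Type*} [MetricSpace X] [MeasurableSpace X]
    (μ : Measure X) (f : X → X) : Prop :=
  ∀ ε > 0, ∃ δ > 0, ∃ B : Set X, MeasurableSet B ∧ μ B = 1 ∧
    ∀ x : ℕ → X, x 0 ∈ B → (∀ n, dist (f (x n)) (x (n + 1)) ≤ δ) →
      ∃ y : X, ∀ n, dist (f^[n] y) (x n) ≤ ε

open Metric Set Filter Function Topology

theorem ChartedSpace.neBot_nhdsNE {H M : Type*} [TopologicalSpace H] [TopologicalSpace M]
    [ChartedSpace H M] [∀ y : H, (𝓝[≠] y).NeBot] (x : M) : (𝓝[≠] x).NeBot := by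
  set e := chartAt H x
  have hx : x ∈ e.source := mem_chart_source H x
  have hcont : Tendsto e.symm (𝓝 (e x)) (𝓝 x) := by
    simpa only [ContinuousAt, e.left_inv hx] using e.continuousAt_symm (e.map_source hx)
  refine (tendsto_nhdsWithin_iff.2 ⟨hcont.mono_left nhdsWithin_le_nhds, ?_⟩ :
    Tendsto e.symm (𝓝[≠] (e x)) (𝓝[≠] x)).neBot
  filter_upwards [self_mem_nhdsWithin,
    nhdsWithin_le_nhds (e.open_target.mem_nhds (e.map_source hx))] with y hne hy hxy
  exact hne (by rw [← e.right_inv hy, mem_singleton_iff.1 hxy]; rfl)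

theorem exists_injOn_Iic_dist_lt {X : Type*} [MetricSpace X] [∀ x : X, (𝓝[≠] x).NeBot]
    (x : ℕ → X) {ρ : ℝ} (hρ : 0 < ρ) (N : ℕ) :
    ∃ x' : ℕ → X, x' 0 = x 0 ∧ (∀ m, dist (x' m) (x m) < ρ) ∧ InjOn x' (Iic N) := by
  induction N with
  | zero =>
    refine ⟨x, rfl, fun m => by simpa using hρ, fun a ha b hb _ => ?_⟩
    rw [mem_Iic, Nat.le_zero] at ha hb
    rw [ha, hb]
  | succ N ih =>
    obtain ⟨x', h0, hdist, hinj⟩ := ih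
    obtain ⟨w, hw, hwx'⟩ :=
      ((infinite_of_mem_nhds _ (ball_mem_nhds (x (N + 1)) hρ)).sdiff
        ((finite_Iic N).image x')).nonempty
    have heq : EqOn (update x' (N + 1) w) x' (Iic N) := fun m hm =>
      update_of_ne (by rw [mem_Iic] at hm; omega) _ _
    refine ⟨update x' (N + 1) w, by simpa using h0, fun m => ?_, ?_⟩
    · rcases eq_or_ne m (N + 1) with rfl | hm
      · simpa using hw
      · simpa [hm] using hdist m
    · rw [← Order.succ_eq_add_one, Order.Iic_succ, Order.succ_eq_add_one,
        injOn_insert (by simp), heq.image_eq, update_self]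
      exact ⟨hinj.congr heq.symm, hwx'⟩

theorem CompactSpace.exists_pos_forall_of_forall_eventually {X : Type*} [TopologicalSpace X]
    [CompactSpace X] {P : X → ℝ → Prop} (hP : ∀ x {δ δ'}, δ' ≤ δ → P x δ → P x δ')
    (hloc : ∀ z, ∃ δ > 0, ∀ᶠ x in 𝓝 z, P x δ) : ∃ δ > 0, ∀ x, P x δ := by
  obtain ⟨δ, hδ, h⟩ := isCompact_univ.induction_on (p := fun s => ∃ δ > 0, ∀ x ∈ s, P x δ)
    ⟨1, one_pos, by simp⟩ (fun s t hst ⟨δ, hδ, ht⟩ => ⟨δ, hδ, fun x hx => ht x (hst hx)⟩)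
    (fun s t ⟨δ, hδ, hs⟩ ⟨δ', hδ', ht⟩ => ⟨min δ δ', lt_min hδ hδ', fun x hx =>
      hx.elim (fun hx => hP x (min_le_left _ _) (hs x hx))
        (fun hx => hP x (min_le_right _ _) (ht x hx))⟩)
    fun z _ => by
      obtain ⟨δ, hδ, hz⟩ := hloc z
      exact ⟨_, mem_nhdsWithin_of_mem_nhds hz, δ, hδ, fun x hx => hx⟩
  exact ⟨δ, hδ, fun x => h x (mem_univ x)⟩

section LocalMove

variable {X : Type*} [MetricSpace X]

structure IsLocalMove (η ρ : ℝ) (a b : X) (φ : X → X) : Prop where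
  continuous : Continuous φ
  apply_center : φ a = b
  dist_le : ∀ x, dist (φ x) x ≤ η
  eq_self_of_notMem_ball : ∀ x ∉ ball a ρ, φ x = x

theorem IsLocalMove.mono {η ρ ρ' : ℝ} {a b : X} {φ : X → X} (h : IsLocalMove η ρ a b φ)
    (hρ : ρ ≤ ρ') : IsLocalMove η ρ' a b φ :=
  ⟨h.continuous, h.apply_center, h.dist_le,
    fun x hx => h.eq_self_of_notMem_ball x fun hx' => hx (ball_subset_ball hρ hx')⟩

variable {E : Type*} [NormedAddCommGroup E]

theorem OpenPartialHomeomorph.exists_dist_symm_add_le [ProperSpace E] {M : Type*}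
    [MetricSpace M] (e : OpenPartialHomeomorph M E) {y : E} (hy : y ∈ e.target) {η : ℝ}
    (hη : 0 < η) :
    ∃ r > 0, ∀ x ∈ e.source, dist (e x) y < r → ∀ w : E, ‖w‖ < r →
      e x + w ∈ e.target ∧ dist (e.symm (e x + w)) x ≤ η := by
  obtain ⟨R, hR, hRt⟩ : ∃ R > 0, closedBall y (2 * R) ⊆ e.target := by
    obtain ⟨r, hr, hball⟩ := Metric.isOpen_iff.1 e.open_target y hy
    exact ⟨r / 3, by positivity, (closedBall_subset_ball (by linarith)).trans hball⟩
  obtain ⟨κ, hκ, hsymm⟩ := uniformContinuousOn_iff_le.1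
    ((isCompact_closedBall y (2 * R)).uniformContinuousOn_of_continuous
      (e.continuousOn_symm.mono hRt)) η hη
  refine ⟨min κ R, lt_min hκ hR, fun x hx hxy w hw => ?_⟩
  have hrR : min κ R ≤ R := min_le_right _ _
  have hex : e x ∈ closedBall y (2 * R) := mem_closedBall.2 (by linarith)
  have hmem : e x + w ∈ closedBall y (2 * R) := mem_closedBall.2 (by
    linarith [dist_triangle (e x + w) (e x) y, dist_self_add_left w (e x)])
  refine ⟨hRt hmem, ?_⟩
  calc dist (e.symm (e x + w)) x = dist (e.symm (e x + w)) (e.symm (e x)) := by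
        rw [e.left_inv hx]
    _ ≤ η := hsymm _ hmem _ hex (by
        rw [dist_self_add_left]; exact hw.le.trans (min_le_left _ _))

variable [NormedSpace ℝ E]

open Classical in
/-- Translation by `v` in the chart `e`, damped by a tent function that vanishes on
`sphere a ρ`, so that it glues continuously with the identity outside `closedBall a ρ`. -/
noncomputable def chartPush (e : OpenPartialHomeomorph X E) (a : X) (ρ : ℝ) (v : E) : X → X :=
  (closedBall a ρ).piecewise (fun x => e.symm (e x + (1 - dist x a / ρ) • v)) id

theorem isLocalMove_chartPush {e : OpenPartialHomeomorph X E} {a : X} {ρ η : ℝ} {v : E}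
    (hρ : 0 < ρ) (hsrc : closedBall a ρ ⊆ e.source)
    (hmove : ∀ x ∈ closedBall a ρ, ∀ t ∈ Icc (0 : ℝ) 1,
      e x + t • v ∈ e.target ∧ dist (e.symm (e x + t • v)) x ≤ η) :
    IsLocalMove η ρ a (e.symm (e a + v)) (chartPush e a ρ v) := by
  have htent : ∀ x ∈ closedBall a ρ, 1 - dist x a / ρ ∈ Icc (0 : ℝ) 1 := fun x hx =>
    ⟨by rw [sub_nonneg, div_le_one hρ]; exact hx, sub_le_self _ (div_nonneg dist_nonneg hρ.le)⟩
  have hsphere : ∀ x ∈ sphere a ρ, e.symm (e x + (1 - dist x a / ρ) • v) = x := by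
    intro x hx
    rw [mem_sphere.1 hx, div_self hρ.ne', sub_self, zero_smul, add_zero,
      e.left_inv (hsrc (sphere_subset_closedBall hx))]
  have hη : 0 ≤ η := dist_nonneg.trans (hmove a (mem_closedBall_self hρ.le) 0 (by simp)).2
  refine ⟨?_, ?_, fun x => ?_, fun x hx => ?_⟩
  · classical
    refine continuous_piecewise (fun x hx => hsphere x (frontier_closedBall_subset_sphere hx))
      ?_ continuousOn_id
    rw [isClosed_closedBall.closure_eq]
    refine e.continuousOn_symm.comp (ContinuousOn.add (e.continuousOn.mono hsrc) ?_)
      fun x hx => (hmove x hx _ (htent x hx)).1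
    fun_prop
  · simp [chartPush, hρ.le]
  · by_cases hx : x ∈ closedBall a ρ
    · simpa [chartPush, hx] using (hmove x hx _ (htent x hx)).2
    · simpa [chartPush, hx] using hη
  · by_cases hx' : x ∈ closedBall a ρ
    · simpa [chartPush, hx'] using hsphere x (by
        simpa [mem_sphere, le_antisymm_iff, mem_closedBall.1 hx'] using hx)
    · simp [chartPush, hx']

theorem ChartedSpace.exists_eventually_isLocalMove [ProperSpace E] {M : Type*} [MetricSpace M]
    [ChartedSpace E M] {η : ℝ} (hη : 0 < η) (z : M) :
    ∃ δ > 0, ∀ᶠ a in 𝓝 z, ∀ b, dist a b ≤ δ → ∀ ρ > 0, ∃ φ, IsLocalMove η ρ a b φ := by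
  set e := chartAt E z
  have hz : z ∈ e.source := mem_chart_source E z
  obtain ⟨r, hr, hsmall⟩ := e.exists_dist_symm_add_le (e.map_source hz) hη
  obtain ⟨s, hs, hsW⟩ := Metric.mem_nhds_iff.1 (inter_mem (e.open_source.mem_nhds hz)
    (e.continuousAt hz (ball_mem_nhds (e z) (half_pos hr))))
  refine ⟨s / 2, half_pos hs, ?_⟩
  filter_upwards [ball_mem_nhds z (half_pos hs)] with a ha b hab ρ hρ
  have haW := hsW (ball_subset_ball (half_le_self hs.le) ha)
  have hbW : b ∈ e.source ∩ e ⁻¹' ball (e z) (r / 2) := hsW <| by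
    rw [mem_ball] at ha ⊢
    linarith [dist_triangle b a z, dist_comm a b]
  have hv : ‖e b - e a‖ < r := by
    rw [← dist_eq_norm]
    linarith [dist_triangle_right (e b) (e a) (e z), mem_ball.1 haW.2, mem_ball.1 hbW.2]
  obtain ⟨ρ', hρ', hsub⟩ := nhds_basis_closedBall.mem_iff.1
    ((e.isOpen_inter_preimage isOpen_ball).mem_nhds
      ⟨haW.1, ball_subset_ball (half_le_self hr.le) haW.2⟩)
  have hsub' : closedBall a (min ρ' ρ) ⊆ e.source ∩ e ⁻¹' ball (e z) r :=
    (closedBall_subset_closedBall (min_le_left _ _)).trans hsub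
  have hpush := isLocalMove_chartPush (lt_min hρ' hρ) (hsub'.trans inter_subset_left)
    fun x hx t ht => hsmall x (hsub' hx).1 (hsub' hx).2 _ (lt_of_le_of_lt (by
      rw [norm_smul, Real.norm_of_nonneg ht.1]
      exact mul_le_of_le_one_left (norm_nonneg _) ht.2) hv)
  rw [add_sub_cancel, e.left_inv hbW.1] at hpush
  exact ⟨_, hpush.mono (min_le_right _ _)⟩

end LocalMove

section Glue

variable {X : Type*} [MetricSpace X] {ι : Type*} [Finite ι]

theorem exists_pos_pairwise_disjoint_closedBall {a : ι → X} (ha : Injective a) :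
    ∃ r > 0, Pairwise (Disjoint on fun i => closedBall (a i) r) := by
  have hsmall : ∀ᶠ r in 𝓝 (0 : ℝ), ∀ i j, i ≠ j → r + r < dist (a i) (a j) := by
    refine eventually_all.2 fun i => eventually_all.2 fun j => ?_
    by_cases hij : i = j
    · simp [hij]
    · have hlim : Tendsto (fun r : ℝ => r + r) (𝓝 0) (𝓝 0) := by
        simpa using (tendsto_id (x := 𝓝 (0 : ℝ))).add tendsto_id
      filter_upwards [hlim.eventually (gt_mem_nhds (dist_pos.2 (ha.ne hij)))] with r hr _
        using hr
  obtain ⟨r, hr, hpos⟩ := ((hsmall.filter_mono nhdsWithin_le_nhds).and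
    (self_mem_nhdsWithin : Ioi (0 : ℝ) ∈ 𝓝[>] 0)).exists
  exact ⟨r, hpos, fun i j hij => closedBall_disjoint_closedBall (hr i j hij)⟩

theorem exists_continuous_forall_apply_eq_of_isLocalMove {a b : ι → X} {φ : ι → X → X}
    {η r : ℝ} (hη : 0 ≤ η) (hr : 0 ≤ r)
    (hdisj : Pairwise (Disjoint on fun i => closedBall (a i) r))
    (hφ : ∀ i, IsLocalMove η r (a i) (b i) (φ i)) :
    ∃ ψ : X → X, Continuous ψ ∧ (∀ i, ψ (a i) = b i) ∧ ∀ x, dist (ψ x) x ≤ η := by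
  classical
  set ψ : X → X := fun x => if h : ∃ i, x ∈ ball (a i) r then φ h.choose x else x
  have hψ_ball : ∀ i, EqOn ψ (φ i) (closedBall (a i) r) := by
    intro i x hx
    by_cases h : ∃ j, x ∈ ball (a j) r
    · have hi : h.choose = i := by
        by_contra hne
        exact disjoint_left.1 (hdisj hne) (ball_subset_closedBall h.choose_spec) hx
      simp only [ψ, dif_pos h, hi]
    · simp only [ψ, dif_neg h]
      exact ((hφ i).eq_self_of_notMem_ball x fun hx' => h ⟨i, hx'⟩).symm
  have hψ_out : EqOn ψ id (⋂ i, (ball (a i) r)ᶜ) := fun x hx => dif_neg (by simpa using hx)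
  set s : Option ι → Set X :=
    fun o => o.elim (⋂ i, (ball (a i) r)ᶜ) fun i => closedBall (a i) r
  have hcov : ⋃ o, s o = univ := by
    refine eq_univ_of_forall fun x => ?_
    by_cases h : ∃ i, x ∈ ball (a i) r
    · obtain ⟨i, hi⟩ := h
      exact mem_iUnion.2 ⟨some i, ball_subset_closedBall hi⟩
    · exact mem_iUnion.2 ⟨none, mem_iInter.2 fun i hi => h ⟨i, hi⟩⟩
  refine ⟨ψ, (locallyFinite_of_finite s).continuous hcov (fun o => ?_) fun o => ?_,
    fun i => (hψ_ball i (mem_closedBall_self hr)).trans (hφ i).apply_center, fun x => ?_⟩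
  · cases o with
    | none => exact isClosed_iInter fun i => isOpen_ball.isClosed_compl
    | some i => exact isClosed_closedBall
  · cases o with
    | none => exact continuousOn_id.congr hψ_out
    | some i => exact (hφ i).continuous.continuousOn.congr (hψ_ball i)
  · obtain ⟨o, hx⟩ := mem_iUnion.1 (hcov.symm ▸ mem_univ x : x ∈ ⋃ o, s o)
    cases o with
    | none => simpa [hψ_out hx] using hη
    | some i => exact hψ_ball i hx ▸ (hφ i).dist_le x

end Glue

theorem exists_continuous_dist_le_iterate_eq {E : Type*} [NormedAddCommGroup E]
    [NormedSpace ℝ E] [ProperSpace E] {M : Type*} [MetricSpace M] [CompactSpace M]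
    [ChartedSpace E M] {f : M → M} (hf : Continuous f) (hfi : Injective f) {η : ℝ}
    (hη : 0 < η) :
    ∃ δ > 0, ∀ (N : ℕ) (x : ℕ → M), InjOn x (Iio N) →
      (∀ j < N, dist (f (x j)) (x (j + 1)) ≤ δ) →
      ∃ g : M → M, Continuous g ∧ (∀ z, dist (f z) (g z) ≤ η) ∧
        ∀ j ≤ N, g^[j] (x 0) = x j := by
  obtain ⟨δ, hδ, hmove⟩ := CompactSpace.exists_pos_forall_of_forall_eventually
    (P := fun (a : M) δ => ∀ b, dist a b ≤ δ → ∀ ρ > 0, ∃ φ, IsLocalMove η ρ a b φ)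
    (fun _ _ _ hle h b hb => h b (hb.trans hle))
    (ChartedSpace.exists_eventually_isLocalMove (E := E) hη)
  refine ⟨δ, hδ, fun N x hinj hx => ?_⟩
  have ha : Injective fun j : Fin N => f (x j) := fun i j hij =>
    Fin.ext (hinj (mem_Iio.2 i.2) (mem_Iio.2 j.2) (hfi hij))
  obtain ⟨r, hr, hdisj⟩ := exists_pos_pairwise_disjoint_closedBall ha
  choose φ hφ using fun j : Fin N => hmove (f (x j)) (x (j + 1)) (hx j j.2) r hr
  obtain ⟨ψ, hψ, hψa, hψη⟩ :=
    exists_continuous_forall_apply_eq_of_isLocalMove hη.le hr.le hdisj hφ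
  refine ⟨ψ ∘ f, hψ.comp hf, fun z => by rw [dist_comm]; exact hψη (f z), fun j hj => ?_⟩
  induction j with
  | zero => rfl
  | succ j ih => rw [iterate_succ_apply', ih (by omega)]; exact hψa ⟨j, hj⟩

theorem exists_forall_dist_iterate_le_of_forall_exists {X : Type*} [MetricSpace X]
    [CompactSpace X] {f : X → X} (hf : Continuous f) {x : ℕ → X} {ε : ℝ}
    (h : ∀ N, ∃ y, ∀ j ≤ N, dist (f^[j] y) (x j) ≤ ε) :
    ∃ y, ∀ j, dist (f^[j] y) (x j) ≤ ε := by
  have hclosed : ∀ N, IsClosed {y | ∀ j ≤ N, dist (f^[j] y) (x j) ≤ ε} := fun N => by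
    simp only [ofPred_forall]
    exact isClosed_iInter fun j => isClosed_iInter fun _ =>
      isClosed_le ((hf.iterate j).dist continuous_const) continuous_const
  obtain ⟨y, hy⟩ := IsCompact.nonempty_iInter_of_sequence_nonempty_isCompact_isClosed
    (fun N => {y | ∀ j ≤ N, dist (f^[j] y) (x j) ≤ ε})
    (fun N y hy j hj => hy j (hj.trans N.le_succ)) h (hclosed 0).isCompact hclosed
  exact ⟨y, fun j => mem_iInter.1 hy j j le_rfl⟩

theorem MuTopStable.exists_dist_iterate_le_of_lt_measure {X : Type*} [MetricSpace X]
    [MeasurableSpace X] {μ : Measure X} {f : X → X} (hstab : MuTopStable μ f) {ε : ℝ}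
    (hε : 0 < ε) :
    ∃ δ > 0, ∀ g : X → X, Continuous g → (∀ x, dist (f x) (g x) ≤ δ) →
      ∀ z, ENNReal.ofReal ε < μ {z} → ∃ y, ∀ j, dist (f^[j] y) (g^[j] z) ≤ ε := by
  obtain ⟨δ, hδ, hstab⟩ := hstab ε hε
  refine ⟨δ, hδ, fun g hg hfg z hz => ?_⟩
  obtain ⟨Y, hgY, -, hμY, h, -, hh, hconj⟩ := hstab g hg hfg
  have hzY : z ∈ Y := by
    by_contra hzY
    exact (hz.trans_le (measure_mono (singleton_subset_iff.2 hzY))).not_ge hμY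
  have hsemi : Semiconj h (hgY.restrict g Y Y) f := fun y => (hconj y).symm
  refine ⟨h ⟨z, hzY⟩, fun j => ?_⟩
  rw [← (hsemi.iterate_right j) ⟨z, hzY⟩, hgY.iterate_restrict]
  exact hh _

theorem MuTopStable.muShadowing_of_forall_le_measure_singleton {E : Type*}
    [NormedAddCommGroup E] [NormedSpace ℝ E] [ProperSpace E] [Nontrivial E] {M : Type*}
    [MetricSpace M] [CompactSpace M] [ChartedSpace E M] [MeasurableSpace M] {μ : Measure M}
    {f : M → M} (hstab : MuTopStable μ f) (hf : Continuous f) (hfi : Injective f) {B : Set M}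
    (hB : MeasurableSet B) (hμB : μ B = 1) {c : ℝ} (hc : 0 < c)
    (hatom : ∀ z ∈ B, ENNReal.ofReal c ≤ μ {z}) : MuShadowing μ f := by
  have := ChartedSpace.neBot_nhdsNE (H := E) (M := M)
  intro ε hε
  obtain ⟨ε', hε', hε'c, hε'ε⟩ : ∃ ε' > 0, ε' < c ∧ ε' ≤ ε / 2 :=
    ⟨min c ε / 2, by positivity, by linarith [min_le_left c ε, lt_min hc hε],
      by linarith [min_le_right c ε]⟩
  obtain ⟨δ₀, hδ₀, hshadow⟩ := hstab.exists_dist_iterate_le_of_lt_measure hε'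
  obtain ⟨δ₁, hδ₁, hrealize⟩ := exists_continuous_dist_le_iterate_eq (E := E) hf hfi hδ₀
  obtain ⟨ρ₀, hρ₀, hfρ₀⟩ := Metric.uniformContinuous_iff.1
    (CompactSpace.uniformContinuous_of_continuous hf) (δ₁ / 3) (by positivity)
  obtain ⟨ρ, hρ, hρρ₀, hρε, hρδ₁⟩ : ∃ ρ > 0, ρ ≤ ρ₀ ∧ ρ ≤ ε / 2 ∧ ρ ≤ δ₁ / 3 :=
    ⟨min ρ₀ (min (ε / 2) (δ₁ / 3)), by positivity, min_le_left _ _,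
      (min_le_right _ _).trans (min_le_left _ _),
      (min_le_right _ _).trans (min_le_right _ _)⟩
  refine ⟨δ₁ / 3, by positivity, B, hB, hμB, fun x hx0 hx =>
    exists_forall_dist_iterate_le_of_forall_exists hf fun N => ?_⟩
  obtain ⟨x', hx'0, hx'x, hx'inj⟩ := exists_injOn_Iic_dist_lt x hρ N
  obtain ⟨g, hg, hfg, hgx'⟩ := hrealize N x' (hx'inj.mono Iio_subset_Iic_self) fun j _ => by
    have h₁ : dist (f (x' j)) (f (x j)) < δ₁ / 3 := hfρ₀ ((hx'x j).trans_le hρρ₀)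
    linarith [dist_triangle4 (f (x' j)) (f (x j)) (x (j + 1)) (x' (j + 1)), hx j,
      dist_comm (x (j + 1)) (x' (j + 1)), hx'x (j + 1)]
  have hheavy : ENNReal.ofReal ε' < μ {x 0} :=
    ((ENNReal.ofReal_lt_ofReal_iff hc).2 hε'c).trans_le (hatom _ hx0)
  obtain ⟨y, hy⟩ := hshadow g hg hfg (x 0) hheavy
  refine ⟨y, fun j hj => ?_⟩
  have h₁ := hy j
  rw [← hx'0, hgx' j hj] at h₁
  linarith [dist_triangle (f^[j] y) (x' j) (x j), hx'x j]

theorem MeasureTheory.Measure.sum_smul_dirac_apply_range {X ι : Type*} [MeasurableSpace X]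
    [MeasurableSingletonClass X] [Fintype ι] (w : ι → ENNReal) (p : ι → X) :
    (∑ i, w i • Measure.dirac (p i)) (range p) = ∑ i, w i := by
  simp [Measure.finsetSum_apply, (finite_range p).measurableSet]

theorem MeasureTheory.Measure.le_sum_smul_dirac_apply_singleton {X ι : Type*} [MeasurableSpace X]
    [MeasurableSingletonClass X] [Fintype ι] (w : ι → ENNReal) (p : ι → X) (i : ι) :
    w i ≤ (∑ j, w j • Measure.dirac (p j)) {p i} := by
  rw [Measure.finsetSum_apply]
  exact le_trans (by simp) (Finset.single_le_sum (fun j _ => bot_le) (Finset.mem_univ i))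

theorem muShadowing_of_muTopStable_finitelySupported_general
    {n : ℕ} (hn : 2 ≤ n) {M : Type*} [MetricSpace M] [CompactSpace M]
    [ChartedSpace (EuclideanSpace ℝ (Fin n)) M]
    [MeasurableSpace M] [BorelSpace M]
    (f : M ≃ₜ M) (μ : Measure M)
    (hfs : ∃ (k : ℕ) (p : Fin k → M) (t : Fin k → ℝ),
      (∀ i, t i ∈ Set.Ioo (0 : ℝ) 1) ∧ (∑ i, t i = 1) ∧
      μ = ∑ i, ENNReal.ofReal (t i) • Measure.dirac (p i))
    (hstab : MuTopStable μ (f : M → M)) :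
    MuShadowing μ (f : M → M) := by
  obtain ⟨k, p, t, ht, htsum, rfl⟩ := hfs
  obtain ⟨c, hct, hc⟩ := (((eventually_all.2 fun i => gt_mem_nhds (ht i).1).filter_mono
    nhdsWithin_le_nhds).and (self_mem_nhdsWithin : Ioi (0 : ℝ) ∈ 𝓝[>] 0)).exists
  have : NeZero n := ⟨by omega⟩
  refine hstab.muShadowing_of_forall_le_measure_singleton (E := EuclideanSpace ℝ (Fin n))
    f.continuous f.injective (finite_range p).measurableSet ?_ hc ?_
  · rw [Measure.sum_smul_dirac_apply_range,
      ← ENNReal.ofReal_sum_of_nonneg fun i _ => (ht i).1.le, htsum, ENNReal.ofReal_one]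
  · rintro _ ⟨i, rfl⟩
    exact (ENNReal.ofReal_le_ofReal (hct i).le).trans
      (Measure.le_sum_smul_dirac_apply_singleton _ p i)

theorem muShadowing_of_muTopStable_finitelySupported
    {n : ℕ} (hn : 2 ≤ n) {M : Type*} [MetricSpace M] [CompactSpace M]
    [ChartedSpace (EuclideanSpace ℝ (Fin n)) M]
    [MeasurableSpace M] [BorelSpace M]
    (f : M ≃ₜ M) (μ : Measure M) [IsProbabilityMeasure μ]
    (hfs : ∃ (k : ℕ) (p : Fin k → M) (t : Fin k → ℝ),
      (∀ i, t i ∈ Set.Ioo (0 : ℝ) 1) ∧ (∑ i, t i = 1) ∧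
      μ = ∑ i, ENNReal.ofReal (t i) • Measure.dirac (p i))
    (hstab : MuTopStable μ (f : M → M)) :
    MuShadowing μ (f : M → M) :=
  muShadowing_of_muTopStable_finitelySupported_general hn f μ hfs hstab
end

section
/- Let X and Z be compact metric spaces, H : X → Z a homeomorphism, μ a Borel probability measure on X, and f : X → X a continuous map. If f is μ-topologically stable, then H ∘ f ∘ H⁻¹ : Z → Z is H_*(μ)-topologically stable, where H_*(μ) = μ ∘ H⁻¹ is the pushforward measure. -/
open MeasureTheory

theorem muTopStable_conjugacy
    {X Z : Type*} [MetricSpace X] [CompactSpace X] [MeasurableSpace X] [BorelSpace X]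
    [MetricSpace Z] [CompactSpace Z] [MeasurableSpace Z] [BorelSpace Z]
    (H : X ≃ₜ Z) (μ : Measure X) [IsProbabilityMeasure μ]
    (f : X → X) (hf : Continuous f)
    (hstab : MuTopStable μ f) :
    MuTopStable (Measure.map H μ) (H ∘ f ∘ H.symm) := by
  intro ε hε
  have hH : UniformContinuous H :=
    CompactSpace.uniformContinuous_of_continuous H.continuous
  obtain ⟨ε₁, hε₁, hH1⟩ := Metric.uniformContinuous_iff.mp hH ε hε
  set ε' := min ε (ε₁ / 2) with hε'def
  have hε' : ε' > 0 := lt_min hε (by positivity)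
  obtain ⟨δ₁, hδ₁, hd1⟩ := hstab ε' hε'
  have hHs : UniformContinuous H.symm :=
    CompactSpace.uniformContinuous_of_continuous H.symm.continuous
  obtain ⟨δ₂, hδ₂, hH2⟩ := Metric.uniformContinuous_iff.mp hHs δ₁ hδ₁
  refine ⟨δ₂ / 2, by positivity, ?_⟩
  intro g' hg' hdist
  set g : X → X := H.symm ∘ g' ∘ H with hgdef
  have hgc : Continuous g := H.symm.continuous.comp (hg'.comp H.continuous)
  have hgd : ∀ x, dist (f x) (g x) ≤ δ₁ := by
    intro x
    have h1 : dist ((H ∘ f ∘ H.symm) (H x)) (g' (H x)) ≤ δ₂ / 2 := hdist (H x)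
    have h2 : dist (H.symm ((H ∘ f ∘ H.symm) (H x))) (H.symm (g' (H x))) < δ₁ :=
      hH2 (lt_of_le_of_lt h1 (by linarith))
    simpa [g, Function.comp] using h2.le
  obtain ⟨Y, hgY, hYc, hYm, h, hhc, hhd, hconj⟩ := hd1 g hgc hgd
  have hmapsTo : Set.MapsTo g' (H '' Y) (H '' Y) := by
    rintro z ⟨y, hy, rfl⟩
    exact ⟨g y, hgY hy, by simp [g]⟩
  have hmem : ∀ z : (H '' Y : Set Z), H.symm (z : Z) ∈ Y := by
    rintro ⟨z, y, hy, rfl⟩; simpa using hy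
  refine ⟨H '' Y, hmapsTo, hYc.image H.continuous, ?_, ?_⟩
  · have hms : MeasurableSet (H '' Y) :=
      (hYc.image H.continuous).isClosed.measurableSet
    rw [Measure.map_apply H.continuous.measurable hms.compl]
    have hpre : H ⁻¹' (H '' Y)ᶜ = Yᶜ := by
      rw [Set.preimage_compl, Set.preimage_image_eq Y H.injective]
    rw [hpre]
    exact le_trans hYm (ENNReal.ofReal_le_ofReal (min_le_left _ _))
  · refine ⟨fun z => H (h ⟨H.symm z, hmem z⟩), ?_, ?_, ?_⟩
    · exact H.continuous.comp (hhc.comp (Continuous.subtype_mk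
        (H.symm.continuous.comp continuous_subtype_val) _))
    · rintro z
      have hd := hhd ⟨H.symm z, hmem z⟩
      have : dist (H (h ⟨H.symm z, hmem z⟩)) (H (H.symm z)) < ε :=
        hH1 (lt_of_le_of_lt hd (lt_of_le_of_lt (min_le_right _ _) (by linarith)))
      simpa using this.le
    · intro z
      have hc := hconj ⟨H.symm z, hmem z⟩
      have hkey : g (H.symm (z : Z)) = H.symm (g' (z : Z)) := by simp [g]
      simp only [Function.comp_apply, Homeomorph.symm_apply_apply]
      rw [hc]
      congr 2
      all_goals simp [g]
end

section
/- Let X be a compact metric space and μ a Borel probability measure on X. Every expansive continuous map f : X → X with the weak μ-shadowing property is μ-topologically stable. -/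
open MeasureTheory

/-- `f` is expansive with some expansivity constant `e > 0`. -/
def Expansive {X : Type*} [MetricSpace X] (f : X → X) : Prop :=
  ∃ e > 0, ∀ x y : X, (∀ n : ℕ, dist (f^[n] x) (f^[n] y) ≤ e) → x = y

/-- `f` has the weak `μ`-shadowing property. -/
def WeakMuShadowing {X : Type*} [MetricSpace X] [MeasurableSpace X]
    (μ : Measure X) (f : X → X) : Prop :=
  ∀ ε > 0, ∃ δ > 0, ∃ B : Set X, MeasurableSet B ∧ μ Bᶜ ≤ ENNReal.ofReal ε ∧
    ∀ x : ℕ → X, x 0 ∈ B → (∀ n, dist (f (x n)) (x (n + 1)) ≤ δ) →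
      ∃ y : X, ∀ n, dist (f^[n] y) (x n) ≤ ε

/-!
Fix `ε` below half an expansivity constant and let `δ`, `B` come from weak `μ`-shadowing. For a
`δ`-perturbation `g` of `f`, every `g`-orbit starting in `B` is a `δ`-pseudo-orbit of `f`, hence
`ε`-shadowed by an `f`-orbit; the relation "the `f`-orbit of `x` `ε`-shadows the `g`-orbit of `y`"
is closed, so shadowing points exist on the compact `g`-invariant set `Y`, the closure of the forward
`g`-orbit of `B`, and by expansivity they are unique. The resulting map `h : Y → X` has closed
graph in a compact space, hence is continuous, and uniqueness gives `f ∘ h = h ∘ g`.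
-/

open Function Set Filter Topology

theorem continuous_of_isClosed_graph {X Y : Type*} [TopologicalSpace X] [TopologicalSpace Y]
    [CompactSpace Y] {h : X → Y} (hgraph : IsClosed {p : X × Y | h p.1 = p.2}) :
    Continuous h := by
  refine continuous_iff_continuousAt.2 fun a => tendsto_nhds_of_unique_mapClusterPt fun b hb => ?_
  have hab : MapClusterPt (a, b) (𝓝 a) fun x => (x, h x) := by
    rw [((𝓝 a).basis_sets.prod_nhds (𝓝 b).basis_sets).mapClusterPt_iff_frequently]
    rintro ⟨s, t⟩ ⟨hs, ht⟩
    exact (mapClusterPt_iff_frequently.1 hb t ht).and_eventually hs |>.mono fun x hx => hx.symm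
  exact (hgraph.mem_of_mapClusterPt hab (Eventually.of_forall fun x => rfl)).symm

theorem mapsTo_closure_iUnion_iterate_image {X : Type*} [TopologicalSpace X] {g : X → X}
    (hg : Continuous g) (B : Set X) :
    MapsTo g (closure (⋃ k, g^[k] '' B)) (closure (⋃ k, g^[k] '' B)) := by
  refine MapsTo.closure (fun y hy => ?_) hg
  obtain ⟨k, x, hx, rfl⟩ := mem_iUnion.1 hy
  exact mem_iUnion.2 ⟨k + 1, x, hx, iterate_succ_apply' g k x⟩

section ShadowsOrbit

variable {X : Type*} [MetricSpace X] {f g : X → X} {ε : ℝ}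

def ShadowsOrbit (f g : X → X) (ε : ℝ) (y x : X) : Prop :=
  ∀ n, dist (f^[n] x) (g^[n] y) ≤ ε

theorem ShadowsOrbit.dist_le {y x : X} (h : ShadowsOrbit f g ε y x) : dist x y ≤ ε :=
  h 0

theorem ShadowsOrbit.iterate {y x : X} (h : ShadowsOrbit f g ε y x) (k : ℕ) :
    ShadowsOrbit f g ε (g^[k] y) (f^[k] x) := fun n => by
  simpa only [← iterate_add_apply] using h (n + k)

theorem ShadowsOrbit.eq {e : ℝ} (hexp : ∀ x x', (∀ n, dist (f^[n] x) (f^[n] x') ≤ e) → x = x')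
    (hε : ε + ε ≤ e) {y x x' : X} (h : ShadowsOrbit f g ε y x) (h' : ShadowsOrbit f g ε y x') :
    x = x' :=
  hexp x x' fun n => calc
    dist (f^[n] x) (f^[n] x') ≤ dist (f^[n] x) (g^[n] y) + dist (f^[n] x') (g^[n] y) :=
      dist_triangle_right _ _ _
    _ ≤ e := by linarith [h n, h' n]

theorem isClosed_setOf_shadowsOrbit (hf : Continuous f) (hg : Continuous g) :
    IsClosed {p : X × X | ShadowsOrbit f g ε p.1 p.2} := by
  simp only [ShadowsOrbit, ofPred_forall]
  exact isClosed_iInter fun n =>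
    isClosed_le (((hf.iterate n).comp continuous_snd).dist ((hg.iterate n).comp continuous_fst))
      continuous_const

theorem isClosed_setOf_exists_shadowsOrbit [CompactSpace X] (hf : Continuous f)
    (hg : Continuous g) : IsClosed {y | ∃ x, ShadowsOrbit f g ε y x} := by
  simpa [image] using isClosedMap_fst_of_compactSpace _ (isClosed_setOf_shadowsOrbit hf hg)

theorem exists_shadowsOrbit_of_shadowing {δ : ℝ} {B : Set X}
    (hB : ∀ x : ℕ → X, x 0 ∈ B → (∀ n, dist (f (x n)) (x (n + 1)) ≤ δ) →
      ∃ y : X, ∀ n, dist (f^[n] y) (x n) ≤ ε)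
    (hfg : ∀ x, dist (f x) (g x) ≤ δ) {y : X} (hy : y ∈ B) : ∃ x, ShadowsOrbit f g ε y x :=
  hB (fun n => g^[n] y) hy fun n => by simpa only [iterate_succ_apply'] using hfg (g^[n] y)

theorem closure_iUnion_iterate_image_subset [CompactSpace X] (hf : Continuous f)
    (hg : Continuous g) {B : Set X} (hB : ∀ y ∈ B, ∃ x, ShadowsOrbit f g ε y x) :
    closure (⋃ k, g^[k] '' B) ⊆ {y | ∃ x, ShadowsOrbit f g ε y x} := by
  refine (isClosed_setOf_exists_shadowsOrbit hf hg).closure_subset_iff.2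
    (iUnion_subset fun k => image_subset_iff.2 fun y hy => ?_)
  obtain ⟨x, hx⟩ := hB y hy
  exact ⟨_, hx.iterate k⟩

theorem exists_semiconj_of_shadowsOrbit [CompactSpace X] (hf : Continuous f) (hg : Continuous g)
    {e : ℝ} (hexp : ∀ x x', (∀ n, dist (f^[n] x) (f^[n] x') ≤ e) → x = x') (hε : ε + ε ≤ e)
    {Y : Set X} (hgY : MapsTo g Y Y) (hY : ∀ y ∈ Y, ∃ x, ShadowsOrbit f g ε y x) :
    ∃ h : Y → X, Continuous h ∧ (∀ y : Y, dist (h y) y ≤ ε) ∧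
      ∀ y : Y, f (h y) = h ⟨g y, hgY y.2⟩ := by
  choose h hh using fun y : Y => hY y y.2
  refine ⟨h, continuous_of_isClosed_graph ?_, fun y => (hh y).dist_le,
    fun y => ((hh y).iterate 1).eq hexp hε (hh _)⟩
  have hgraph : {p : Y × X | h p.1 = p.2} = {p | ShadowsOrbit f g ε p.1 p.2} := by
    ext ⟨y, x⟩
    exact ⟨fun (hx : h y = x) => hx ▸ hh y, (hh y).eq hexp hε⟩
  rw [hgraph]
  exact (isClosed_setOf_shadowsOrbit hf hg).preimage (continuous_subtype_val.prodMap continuous_id)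

end ShadowsOrbit

theorem muTopStable_of_expansive_weakMuShadowing_general
    {X : Type*} [MetricSpace X] [CompactSpace X] [MeasurableSpace X]
    (μ : Measure X)
    (f : X → X) (hf : Continuous f)
    (hexp : Expansive f) (hsh : WeakMuShadowing μ f) :
    MuTopStable μ f := by
  obtain ⟨e, he, hexp⟩ := hexp
  intro ε hε
  obtain ⟨δ, hδ, B, -, hBμ, hB⟩ := hsh (min ε (e / 2)) (lt_min hε (half_pos he))
  refine ⟨δ, hδ, fun g hg hfg => ?_⟩
  set Y := closure (⋃ k, g^[k] '' B)
  have hgY : MapsTo g Y Y := mapsTo_closure_iUnion_iterate_image hg B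
  have hBY : B ⊆ Y := subset_closure.trans' (subset_iUnion_of_subset 0 (image_id B).ge)
  obtain ⟨h, hh, hdist, hconj⟩ := exists_semiconj_of_shadowsOrbit hf hg hexp
    (by linarith [min_le_right ε (e / 2)]) hgY
    (closure_iUnion_iterate_image_subset hf hg fun y hy => exists_shadowsOrbit_of_shadowing hB hfg hy)
  refine ⟨Y, hgY, isClosed_closure.isCompact, ?_, h, hh,
    fun y => (hdist y).trans (min_le_left _ _), hconj⟩
  calc μ Yᶜ ≤ μ Bᶜ := measure_mono (compl_subset_compl.2 hBY)
    _ ≤ ENNReal.ofReal (min ε (e / 2)) := hBμ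
    _ ≤ ENNReal.ofReal ε := ENNReal.ofReal_le_ofReal (min_le_left _ _)

theorem muTopStable_of_expansive_weakMuShadowing
    {X : Type*} [MetricSpace X] [CompactSpace X] [MeasurableSpace X] [BorelSpace X]
    (μ : Measure X) [IsProbabilityMeasure μ]
    (f : X → X) (hf : Continuous f)
    (hexp : Expansive f) (hsh : WeakMuShadowing μ f) :
    MuTopStable μ f :=
  muTopStable_of_expansive_weakMuShadowing_general μ f hf hexp hsh
end

section
/- Let X be a compact metric space, f : X → X a continuous map, and μ a Borel probability measure on X. If f is μ-topologically stable, then every atom of μ is a topologically stable point of f, i.e., A(μ) ⊂ T(f). -/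
open MeasureTheory

theorem atoms_subset_topStablePoints
    {X : Type*} [MetricSpace X] [CompactSpace X] [MeasurableSpace X] [BorelSpace X]
    (f : X → X) (hf : Continuous f)
    (μ : Measure X) [IsProbabilityMeasure μ]
    (hstab : MuTopStable μ f) :
    {p : X | 0 < μ {p}} ⊆ {p : X | TopStablePoint f p} := by
  intro p hp
  intro ε hε
  have hfin : μ {p} ≠ ⊤ := measure_ne_top μ _
  set t : ℝ := (μ {p}).toReal with ht
  have htpos : 0 < t := ENNReal.toReal_pos (ne_of_gt hp) hfin
  set ε' : ℝ := min ε (t / 2) with hε'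
  have hε'pos : 0 < ε' := lt_min hε (by linarith)
  have hε'lt : ENNReal.ofReal ε' < μ {p} := by
    calc ENNReal.ofReal ε' ≤ ENNReal.ofReal (t / 2) :=
          ENNReal.ofReal_le_ofReal (min_le_right _ _)
      _ < ENNReal.ofReal t := by
          exact ENNReal.ofReal_lt_ofReal_iff htpos |>.2 (by linarith)
      _ = μ {p} := ENNReal.ofReal_toReal hfin
  obtain ⟨δ, hδ, hδ'⟩ := hstab ε' hε'pos
  refine ⟨δ, hδ, fun g hg hdist => ?_⟩
  obtain ⟨Y, hgY, hYc, hμY, h, hhc, hhd, hhconj⟩ := hδ' g hg hdist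
  have hpY : p ∈ Y := by
    by_contra hpY
    have : μ {p} ≤ μ Yᶜ := measure_mono (by simpa using hpY)
    exact absurd (this.trans hμY) (not_le.2 hε'lt)
  have horb : {x | ∃ n : ℕ, g^[n] p = x} ⊆ Y := by
    rintro x ⟨n, rfl⟩
    induction n with
    | zero => simpa using hpY
    | succ k ih => rw [Function.iterate_succ_apply']; exact hgY ih
  have hcl : closure {x | ∃ n : ℕ, g^[n] p = x} ⊆ Y :=
    hYc.isClosed.closure_subset_iff.2 horb
  refine ⟨fun y => h ⟨(y : X), hcl y.2⟩, ?_, ?_, ?_⟩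
  · exact hhc.comp (Continuous.subtype_mk continuous_subtype_val _)
  · exact fun y => (hhd ⟨(y : X), hcl y.2⟩).trans (min_le_left _ _)
  · intro y hy
    have := hhconj ⟨(y : X), hcl y.2⟩
    simpa using this
end

section
/- Let f : S¹ → S¹ be a homeomorphism of the circle whose rotation number is irrational, i.e., f admits a lift F : ℝ → ℝ (a homeomorphism with f ∘ P = P ∘ F, where P(t) = e^{2πit}) whose translation number τ(f) = lim_{n→∞} (Fⁿ(t) − t)/n is irrational. Then there is no Borel probability measure μ on S¹ for which f is μ-topologically stable. -/
open MeasureTheory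

/-!
A lift with irrational translation number is increasing (an orientation-reversing one has a
fixed point) and of degree one. Given `δ` from stability with `ε = 1/2`, Dirichlet's theorem
gives `|qτ - p| < δ`, and by connectedness in `α ∈ [-δ, δ]` the lift `G = α + F` of the
`δ`-close map `g = α + f` satisfies `G^q x₀ = x₀ + p` for some `x₀`. Orbits of the monotone
degree-one lift `G^q - p` then converge to its fixed points, so the compact `g`-invariant set
`Y` (nonempty as `μ Yᶜ ≤ 1/2`) contains a `q`-periodic point of `g`; the semiconjugacy `h`
carries it to a `q`-periodic point of `f`, forcing `τ` to be rational.
-/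

open Function Set Filter Topology Multiplicative CircleDeg1Lift

theorem IsPreconnected.exists_mem_apply_eq_zero {A X : Type*} [TopologicalSpace A]
    [TopologicalSpace X] [PreconnectedSpace X] {S : Set A} (hS : IsPreconnected S)
    {Φ : A → X → ℝ} (hΦA : ∀ x, Continuous fun a => Φ a x) (hΦX : ∀ a, Continuous (Φ a))
    {a b : A} (ha : a ∈ S) (hb : b ∈ S) (hneg : ∃ x, Φ a x < 0) (hpos : ∃ x, 0 < Φ b x) :
    ∃ c ∈ S, ∃ x, Φ c x = 0 := by
  by_contra! hne
  obtain ⟨x₀, hx₀⟩ := hneg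
  obtain ⟨c, hcS, hc₁, hc₂⟩ := hS (⋃ x, (Φ · x) ⁻¹' Iio 0) (⋃ x, (Φ · x) ⁻¹' Ioi 0)
    (isOpen_iUnion fun x => isOpen_Iio.preimage (hΦA x))
    (isOpen_iUnion fun x => isOpen_Ioi.preimage (hΦA x))
    (fun a haS => (hne a haS x₀).lt_or_gt.imp (mem_iUnion_of_mem x₀) (mem_iUnion_of_mem x₀))
    ⟨a, ha, mem_iUnion_of_mem x₀ hx₀⟩ (hpos.elim fun x hx => ⟨b, hb, mem_iUnion_of_mem x hx⟩)
  obtain ⟨x₁, hx₁ : Φ c x₁ < 0⟩ := mem_iUnion.1 hc₁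
  obtain ⟨x₂, hx₂ : 0 < Φ c x₂⟩ := mem_iUnion.1 hc₂
  obtain ⟨x, hx⟩ := intermediate_value_univ x₁ x₂ (hΦX c) ⟨hx₁.le, hx₂.le⟩
  exact hne c hcS x hx

theorem exists_isFixedPt_of_continuous_antitone {F : ℝ → ℝ} (hc : Continuous F)
    (hF : Antitone F) : ∃ x, IsFixedPt F x :=
  intermediate_value_univ₂ (a := max 0 (F 0)) (b := min 0 (F 0)) hc continuous_id
    ((hF (le_max_left _ _)).trans (le_max_right _ _))
    ((min_le_right _ _).trans (hF (min_le_left _ _)))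

theorem exists_isFixedPt_tendsto_iterate_of_mapsTo_Icc {α : Type*}
    [ConditionallyCompleteLinearOrder α] [TopologicalSpace α] [OrderTopology α]
    {g : α → α} (hg : Monotone g) (hc : Continuous g) {a b t : α}
    (hab : MapsTo g (Icc a b) (Icc a b)) (ht : t ∈ Icc a b) :
    ∃ s, IsFixedPt g s ∧ Tendsto (fun n => g^[n] t) atTop (𝓝 s) := by
  have horbit : range (fun n => g^[n] t) ⊆ Icc a b := range_subset_iff.2 fun n => hab.iterate n ht
  obtain ⟨s, hs⟩ : ∃ s, Tendsto (fun n => g^[n] t) atTop (𝓝 s) := by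
    rcases le_total t (g t) with hle | hle
    · exact ⟨_, tendsto_atTop_ciSup (hg.monotone_iterate_of_le_map hle)
        (bddAbove_Icc.mono horbit)⟩
    · exact ⟨_, tendsto_atTop_ciInf (hg.antitone_iterate_of_map_le hle)
        (bddBelow_Icc.mono horbit)⟩
  exact ⟨s, isFixedPt_of_tendsto_iterate hs hc.continuousAt, hs⟩

theorem MeasureTheory.nonempty_of_measure_compl_lt_one {X : Type*} [MeasurableSpace X]
    {μ : Measure X} [IsProbabilityMeasure μ] {Y : Set X} (h : μ Yᶜ < 1) : Y.Nonempty :=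
  nonempty_iff_ne_empty.2 fun hY => by simp [hY] at h

theorem Set.MapsTo.isPeriodicPt_restrict {α : Type*} {g : α → α} {Y : Set α} (hg : MapsTo g Y Y)
    {n : ℕ} {z : Y} (hz : IsPeriodicPt g n z) : IsPeriodicPt (hg.restrict g Y Y) n z :=
  Subtype.ext <| by rw [hg.iterate_restrict]; exact hz

theorem UnitAddCircle.exists_int_eq_add_of_coe_eq {x y : ℝ} (h : (x : UnitAddCircle) = y) :
    ∃ m : ℤ, y = m + x := by
  rw [QuotientAddGroup.eq, AddSubgroup.mem_zmultiples_iff] at h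
  obtain ⟨m, hm⟩ := h
  exact ⟨m, by simp only [zsmul_eq_mul, mul_one] at hm; linarith⟩


theorem strictMono_of_tendsto_irrational {F : ℝ → ℝ} (hc : Continuous F) (hinj : Injective F)
    {τ : ℝ} (hτ : Irrational τ)
    (hrot : ∀ t, Tendsto (fun n : ℕ => (F^[n] t - t) / n) atTop (𝓝 τ)) : StrictMono F := by
  refine (hc.strictMono_of_inj hinj).resolve_right fun hanti => ?_
  obtain ⟨u, hu⟩ := exists_isFixedPt_of_continuous_antitone hc hanti.antitone
  have hτ0 : τ = 0 := tendsto_nhds_unique (hrot u) <| by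
    simp only [iterate_fixed hu, sub_self, zero_div]
    exact tendsto_const_nhds
  exact hτ.ne_zero hτ0

theorem Real.exists_nat_pos_abs_mul_sub_round_lt (ξ : ℝ) {δ : ℝ} (hδ : 0 < δ) :
    ∃ q : ℕ, 0 < q ∧ |q * ξ - round (q * ξ)| < δ := by
  obtain ⟨n, hn⟩ := exists_nat_one_div_lt hδ
  obtain ⟨q, hq, -, hqξ⟩ := Real.exists_nat_abs_mul_sub_round_le ξ n.succ_pos
  refine ⟨q, hq, hqξ.trans_lt (lt_of_le_of_lt ?_ hn)⟩
  gcongr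
  linarith

section Lift

variable {f : UnitAddCircle → UnitAddCircle}

theorem map_add_one_of_semiconj_coe (hf : Injective f) {F : ℝ → ℝ} (hF : StrictMono F)
    (hF' : Surjective F) (hlift : Semiconj ((↑) : ℝ → UnitAddCircle) F f) (x : ℝ) :
    F (x + 1) = F x + 1 := by
  -- if `n ≥ 2`, the preimage `u` of `F x + 1` lies strictly between `x` and `x + 1`, yet `f`
  -- identifies the classes of `u` and `x`
  obtain ⟨n, hn⟩ := UnitAddCircle.exists_int_eq_add_of_coe_eq (x := F x) (y := F (x + 1)) <| by
    rw [hlift.eq, hlift.eq, AddCircle.coe_add_period]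
  have hn_pos : 0 < n := by exact_mod_cast (show (0 : ℝ) < n by linarith [hF (lt_add_one x)])
  obtain hn_one | hn_two : n = 1 ∨ 2 ≤ n := by omega
  · rw [hn, hn_one, Int.cast_one, add_comm]
  obtain ⟨u, hu⟩ := hF' (F x + 1)
  have hxu : x < u := hF.lt_iff_lt.1 (by linarith)
  have hux : u < x + 1 := hF.lt_iff_lt.1 <| by
    rw [hu, hn]; linarith [show (2 : ℝ) ≤ n by exact_mod_cast hn_two]
  have hcoe : (u : UnitAddCircle) = x := hf <| by
    rw [← hlift.eq, ← hlift.eq, hu, AddCircle.coe_add_period]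
  rw [AddCircle.coe_eq_coe_iff_of_mem_Ico (a := x) ⟨hxu.le, hux⟩ ⟨le_rfl, by linarith⟩] at hcoe
  exact absurd hcoe hxu.ne'

theorem CircleDeg1Lift.exists_translationNumber_eq_div_of_isPeriodicPt {F : CircleDeg1Lift}
    (hlift : Semiconj ((↑) : ℝ → UnitAddCircle) F f) {q : ℕ} (hq : 0 < q) {z : UnitAddCircle}
    (hz : IsPeriodicPt f q z) : ∃ m : ℤ, F.translationNumber = m / q := by
  obtain ⟨s, rfl⟩ := QuotientAddGroup.mk_surjective z
  obtain ⟨m, hm⟩ := UnitAddCircle.exists_int_eq_add_of_coe_eq <|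
    ((hlift.iterate_right q).eq s).trans hz
  exact ⟨-m, F.translationNumber_of_map_pow_eq_add_int (by rw [coe_pow]; push_cast; linarith) hq⟩

theorem exists_circleDeg1Lift_of_tendsto_irrational (hf : Injective f) (F : ℝ ≃ₜ ℝ)
    (hlift : Semiconj ((↑) : ℝ → UnitAddCircle) F f) {τ : ℝ} (hτ : Irrational τ)
    (hrot : ∀ t, Tendsto (fun n : ℕ => ((F : ℝ → ℝ)^[n] t - t) / n) atTop (𝓝 τ)) :
    ∃ G : CircleDeg1Lift, ⇑G = F ∧ G.translationNumber = τ := by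
  have hmono := strictMono_of_tendsto_irrational F.continuous F.injective hτ hrot
  let G : CircleDeg1Lift :=
    ⟨⟨F, hmono.monotone⟩, map_add_one_of_semiconj_coe hf hmono F.surjective hlift⟩
  refine ⟨G, rfl, G.translationNumber_eq_of_tendsto₀ ?_⟩
  exact (by simpa using hrot 0 : Tendsto (fun n : ℕ => (F : ℝ → ℝ)^[n] 0 / n) atTop (𝓝 τ))

end Lift

namespace CircleDeg1Lift

variable (f : CircleDeg1Lift)

theorem translate_mul_apply (α x : ℝ) :
    ((translate (ofAdd α) : CircleDeg1Lift) * f) x = α + f x := by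
  rw [mul_apply, translate_apply]

theorem continuous_translate_mul (hf : Continuous f) (α : ℝ) :
    Continuous (translate (ofAdd α) * f : CircleDeg1Lift) := by
  rw [coe_mul]
  exact (continuous_const.add continuous_id).comp hf

theorem semiconj_translate_mul {g : UnitAddCircle → UnitAddCircle}
    (hlift : Semiconj ((↑) : ℝ → UnitAddCircle) f g) (α : ℝ) :
    Semiconj ((↑) : ℝ → UnitAddCircle) (translate (ofAdd α) * f : CircleDeg1Lift)
      fun z => α + g z := fun x => by
  rw [translate_mul_apply, AddCircle.coe_add, hlift.eq]

theorem pow_translate_mul_apply_add_sub_le {α β : ℝ} (hαβ : α ≤ β) {n : ℕ} (hn : n ≠ 0)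
    (x : ℝ) : ((translate (ofAdd α) * f : CircleDeg1Lift) ^ n) x + (β - α) ≤
      ((translate (ofAdd β) * f : CircleDeg1Lift) ^ n) x := by
  obtain ⟨n, rfl⟩ := Nat.exists_eq_succ_of_ne_zero hn
  have hle : (translate (ofAdd α) * f : CircleDeg1Lift) ^ n ≤ (translate (ofAdd β) * f) ^ n :=
    pow_mono (fun y => by simp only [translate_mul_apply]; linarith) n
  simp only [pow_succ', mul_apply, translate_apply]
  linarith [f.monotone (hle x)]

theorem continuous_pow_translate_mul_apply (hf : Continuous f) (n : ℕ) (x : ℝ) :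
    Continuous fun α => ((translate (ofAdd α) * f : CircleDeg1Lift) ^ n) x := by
  induction n with
  | zero => exact continuous_const
  | succ n ih =>
    simp only [pow_succ', mul_apply, translate_apply]
    exact continuous_id.add (hf.comp ih)

theorem exists_abs_le_pow_translate_mul_apply_eq (hf : Continuous f) {q : ℕ} (hq : 0 < q)
    {p : ℤ} {δ : ℝ} (hδ : |q * f.translationNumber - p| < δ) :
    ∃ α, |α| ≤ δ ∧ ∃ x, ((translate (ofAdd α) * f : CircleDeg1Lift) ^ q) x = x + p := by
  rw [abs_lt] at hδ
  have hpow : (translate (ofAdd 0) * f : CircleDeg1Lift) ^ q = f ^ q := by simp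
  have hτ : (f ^ q).translationNumber = q * f.translationNumber := translationNumber_pow f q
  obtain ⟨x₁, hx₁⟩ : ∃ x, (f ^ q) x < x + (p + δ) := by
    by_contra! h
    linarith [le_translationNumber_of_add_le _ h]
  obtain ⟨x₂, hx₂⟩ : ∃ x, x + (p - δ) < (f ^ q) x := by
    by_contra! h
    linarith [translationNumber_le_of_le_add _ h]
  obtain ⟨α, hα, x, hx⟩ := isPreconnected_Icc.exists_mem_apply_eq_zero
    (a := -δ) (b := δ)
    (Φ := fun α x => ((translate (ofAdd α) * f : CircleDeg1Lift) ^ q) x - (x + p))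
    (fun x => (f.continuous_pow_translate_mul_apply hf q x).sub continuous_const)
    (fun α => (continuous_pow _ (f.continuous_translate_mul hf α) q).sub
      (continuous_id.add continuous_const))
    (left_mem_Icc.2 (by linarith)) (right_mem_Icc.2 (by linarith))
    ⟨x₁, by
      have := f.pow_translate_mul_apply_add_sub_le (neg_nonpos.2 (by linarith : 0 ≤ δ))
        hq.ne' x₁
      rw [hpow] at this
      linarith⟩
    ⟨x₂, by
      have := f.pow_translate_mul_apply_add_sub_le (by linarith : 0 ≤ δ) hq.ne' x₂
      rw [hpow] at this
      linarith⟩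
  exact ⟨α, abs_le.2 hα, x, sub_eq_zero.1 hx⟩

theorem exists_isFixedPt_tendsto_iterate (hf : Continuous f) {x₀ : ℝ} (hx₀ : IsFixedPt f x₀)
    (t : ℝ) : ∃ s, IsFixedPt f s ∧ Tendsto (fun n => f^[n] t) atTop (𝓝 s) := by
  have hfix : ∀ m : ℤ, f (x₀ + m) = x₀ + m := fun m => by rw [map_add_int, hx₀.eq]
  refine exists_isFixedPt_tendsto_iterate_of_mapsTo_Icc f.monotone hf
    (a := x₀ + ⌊t - x₀⌋) (b := x₀ + (⌊t - x₀⌋ + 1 : ℤ)) ?_ ⟨?_, ?_⟩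
  · have := f.monotone.mapsTo_Icc (a := x₀ + ⌊t - x₀⌋) (b := x₀ + (⌊t - x₀⌋ + 1 : ℤ))
    rwa [hfix, hfix] at this
  · linarith [Int.floor_le (t - x₀)]
  · push_cast
    linarith [Int.lt_floor_add_one (t - x₀)]

end CircleDeg1Lift

theorem exists_isPeriodicPt_mem_of_mapsTo {g : UnitAddCircle → UnitAddCircle} {G : CircleDeg1Lift}
    (hG : Continuous G) (hlift : Semiconj ((↑) : ℝ → UnitAddCircle) G g) {q : ℕ} {p : ℤ}
    {x₀ : ℝ} (hx₀ : (G ^ q) x₀ = x₀ + p) {Y : Set UnitAddCircle} (hY : IsClosed Y)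
    (hYne : Y.Nonempty) (hgY : MapsTo g Y Y) : ∃ z ∈ Y, IsPeriodicPt g q z := by
  set H : CircleDeg1Lift := translate (ofAdd (-p : ℝ)) * G ^ q
  have hH : Continuous H := (G ^ q).continuous_translate_mul (G.continuous_pow hG q) _
  have hHlift : Semiconj ((↑) : ℝ → UnitAddCircle) H (g^[q]) := fun x => by
    rw [translate_mul_apply, ← (hlift.iterate_right q).eq, coe_pow]
    simp
  obtain ⟨t, ht⟩ := hYne
  obtain ⟨t, rfl⟩ := QuotientAddGroup.mk_surjective t
  obtain ⟨s, hs, hlim⟩ := H.exists_isFixedPt_tendsto_iterate hH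
    (x₀ := x₀) (by rw [IsFixedPt, translate_mul_apply, hx₀]; ring) t
  refine ⟨s, hY.mem_of_tendsto (((AddCircle.continuous_mk' 1).tendsto s).comp hlim)
    (Eventually.of_forall fun n => ?_), hs.map hHlift⟩
  change ((H^[n] t : ℝ) : UnitAddCircle) ∈ Y
  rw [(hHlift.iterate_right n).eq]
  exact (hgY.iterate q).iterate n ht

/-- A circle homeomorphism with irrational rotation number is not `μ`-topologically
stable for any Borel probability measure `μ`. Here the circle is `ℝ/ℤ`, the projection
`P : ℝ → ℝ/ℤ` is the natural quotient map, `F` is a lift of `f`, and the rotation number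
`τ` is the limit of `(Fⁿ(t) - t)/n`. -/
theorem no_muTopStable_of_irrational_rotation_number
    (f : UnitAddCircle ≃ₜ UnitAddCircle) (F : ℝ ≃ₜ ℝ)
    (hlift : ∀ t : ℝ, f (t : UnitAddCircle) = ((F t : ℝ) : UnitAddCircle))
    (τ : ℝ) (hτ : Irrational τ)
    (hrot : ∀ t : ℝ, Filter.Tendsto (fun n : ℕ => ((F : ℝ → ℝ)^[n] t - t) / n)
      Filter.atTop (nhds τ))
    (μ : Measure UnitAddCircle) [IsProbabilityMeasure μ] :
    ¬ MuTopStable μ (f : UnitAddCircle → UnitAddCircle) := by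
  intro hstab
  obtain ⟨G, hGF, hGτ⟩ := exists_circleDeg1Lift_of_tendsto_irrational f.injective F
    (fun t => (hlift t).symm) hτ hrot
  have hsemi : Semiconj ((↑) : ℝ → UnitAddCircle) G f := fun t => hGF ▸ (hlift t).symm
  have hGc : Continuous G := hGF ▸ F.continuous
  obtain ⟨δ, hδ, hstab⟩ := hstab (1 / 2) one_half_pos
  obtain ⟨q, hq, hqτ⟩ := Real.exists_nat_pos_abs_mul_sub_round_lt τ hδ
  obtain ⟨α, hα, x₀, hx₀⟩ := G.exists_abs_le_pow_translate_mul_apply_eq hGc hq (hGτ ▸ hqτ)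
  obtain ⟨Y, hgY, hYc, hμY, h, -, -, hh⟩ := hstab (fun z => α + f z)
    (continuous_const.add f.continuous) fun z => by
      rw [dist_add_self_right]
      exact QuotientAddGroup.norm_mk_le_norm.trans (by rwa [Real.norm_eq_abs])
  obtain ⟨z, hzY, hz⟩ := exists_isPeriodicPt_mem_of_mapsTo (G.continuous_translate_mul hGc α)
    (G.semiconj_translate_mul hsemi α) hx₀ hYc.isClosed
    (nonempty_of_measure_compl_lt_one (hμY.trans_lt (ENNReal.ofReal_lt_one.2 one_half_lt_one)))
    hgY
  obtain ⟨m, hm⟩ := G.exists_translationNumber_eq_div_of_isPeriodicPt hsemi hq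
    ((hgY.isPeriodicPt_restrict (z := ⟨z, hzY⟩) hz).map fun y => (hh y).symm)
  exact hτ ⟨m / q, by rw [← hGτ, hm]; push_cast; rfl⟩
end

section
/- For every real number α, the circle rotation R_α : S¹ → S¹, given by R_α(x) = x + α on the circle ℝ/ℤ, is not μ-topologically stable for any Borel probability measure μ on S¹. -/
/-!
Perturb `R_α` to the rotation `R_{α-t}` with `0 < t` small and take `ε = 1/16`. The
semiconjugacy `R_α ∘ h = h ∘ R_{α-t}` propagates along the orbit of any point `y` of the
(nonempty) invariant set, giving `h (y + n(α - t)) = h y + nα`; since `h` moves points by at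
most `ε`, every multiple `n • t` lies within `2ε = 1/8` of `0` on the circle. But some
multiple of `t` lands in `[1/4, 1/2]`.
-/

open MeasureTheory

open Function Set

theorem norm_nsmul_sub_le_of_semiconj {G : Type*} [SeminormedAddCommGroup G] {a b : G}
    {Y : Set G} (hY : MapsTo (· + b) Y Y) {h : Y → G}
    (hsemi : Semiconj h (hY.restrict _ Y Y) (· + a)) {ε : ℝ}
    (hclose : ∀ y, dist (h y) y ≤ ε) (y : Y) (n : ℕ) : ‖n • (a - b)‖ ≤ 2 * ε := by
  have hn := hclose ((hY.restrict _ Y Y)^[n] y)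
  rw [(hsemi.iterate_right n).eq, hY.coe_iterate_restrict, add_right_iterate_apply,
    add_right_iterate_apply, dist_eq_norm] at hn
  have h0 := hclose y
  rw [dist_eq_norm] at h0
  calc ‖n • (a - b)‖ = ‖(h y + n • a - (y + n • b)) - (h y - y)‖ := by
        rw [smul_sub]; congr 1; abel
    _ ≤ ε + ε := (norm_sub_le _ _).trans (add_le_add hn h0)
    _ = 2 * ε := by ring

theorem AddCircle.exists_quarter_period_le_norm_nsmul {p t : ℝ} (ht : 0 < t)
    (htp : t ≤ p / 4) : ∃ n : ℕ, p / 4 ≤ ‖n • (t : AddCircle p)‖ := by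
  have hp : 0 < p := by linarith
  set n := ⌈p / 4 / t⌉₊
  have hlow : p / 4 ≤ n * t := (div_le_iff₀ ht).1 (Nat.le_ceil _)
  have hup : n * t ≤ p / 2 := by
    have := mul_lt_mul_of_pos_right (Nat.ceil_lt_add_one (by positivity : 0 ≤ p / 4 / t)) ht
    rw [add_mul, div_mul_cancel₀ _ ht.ne'] at this
    linarith
  refine ⟨n, ?_⟩
  rw [← AddCircle.coe_nsmul, nsmul_eq_mul, (AddCircle.norm_coe_eq_abs_iff p hp.ne').2,
    abs_of_nonneg (by positivity)]
  · exact hlow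
  · rwa [abs_of_nonneg (by positivity), abs_of_pos hp]

/-- No circle rotation `R_α : x ↦ x + α` on `S¹ = ℝ/ℤ` is `μ`-topologically stable for
any Borel probability measure `μ` on `S¹`. -/
theorem rotation_not_muTopStable
    (α : ℝ) (μ : Measure UnitAddCircle) [IsProbabilityMeasure μ] :
    ¬ MuTopStable μ (fun x : UnitAddCircle => x + (α : UnitAddCircle)) := by
  intro hstab
  obtain ⟨δ, hδ, H⟩ := hstab (1 / 16) (by norm_num)
  set t := min δ (1 / 4)
  have ht : 0 < t := lt_min hδ (by norm_num)
  have hnorm_t : ‖(t : UnitAddCircle)‖ = t := by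
    rw [(AddCircle.norm_coe_eq_abs_iff 1 one_ne_zero).2, abs_of_pos ht]
    rw [abs_of_pos ht, abs_one]
    linarith [min_le_right δ (1 / 4)]
  obtain ⟨Y, hY, -, hμY, h, -, hclose, hsemi⟩ :=
    H (· + ((α - t : ℝ) : UnitAddCircle)) (continuous_add_const _) fun x => by
      rw [dist_add_left, dist_eq_norm, ← AddCircle.coe_sub, sub_sub_cancel, hnorm_t]
      exact min_le_left _ _
  obtain ⟨y, hy⟩ : Y.Nonempty := nonempty_iff_ne_empty.2 fun hY => by
    rw [hY, compl_empty, measure_univ, ENNReal.one_le_ofReal] at hμY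
    norm_num at hμY
  obtain ⟨n, hn⟩ := AddCircle.exists_quarter_period_le_norm_nsmul ht (min_le_right δ (1 / 4))
  have := norm_nsmul_sub_le_of_semiconj hY (fun y => (hsemi y).symm) hclose ⟨y, hy⟩ n
  rw [← AddCircle.coe_sub, sub_sub_cancel] at this
  linarith
end
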